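/- arXiv:2504.18427 — 2 statements merged into one kernel-verified Lean document; each statement's English description precedes it below -/
import Mathlib

section
/- For every constant c > 0, there exists a graph G on n vertices (namely a complete bipartite graph K_{t,t} with t sufficiently large, which has pathwidth exactly t and n = 2t vertices) such that for every λ ≥ 1, the mixing time of the Glauber dynamics on the independent sets of G with fugacity λ satisfies τ_{G,λ} ≥ ((λ+1)/2)^{pw(G)} · n^c. -/
open Finset

section HardCoreDefs

variable {V : Type*} [Fintype V] [DecidableEq V]

/-- `I` is an independent set of the simple graph `G`. -/
def IsIndep (G : SimpleGraph V) (I : Finset V) : Prop :=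
  ∀ u ∈ I, ∀ v ∈ I, ¬ G.Adj u v

open Classical in
/-- The set `𝓘(G)` of independent sets of `G`. -/
noncomputable def indepSets (G : SimpleGraph V) : Finset (Finset V) :=
  Finset.univ.filter fun I => IsIndep G I

/-- The hard-core partition function `Z_G(λ)`. -/
noncomputable def Z (G : SimpleGraph V) (lam : ℝ) : ℝ :=
  ∑ I ∈ indepSets G, lam ^ I.card

/-- The hard-core distribution `π_{G,λ}`. -/
noncomputable def hardCore (G : SimpleGraph V) (lam : ℝ) (I : Finset V) : ℝ :=
  lam ^ I.card / Z G lam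

open Classical in
/-- The transition probabilities of the Glauber dynamics on independent sets of `G`
with fugacity `λ`. -/
noncomputable def glauberP (G : SimpleGraph V) (lam : ℝ) (I J : Finset V) : ℝ :=
  (1 / (Fintype.card V : ℝ)) * ∑ v : V,
    if v ∈ I then
      (if J = I.erase v then 1 / (lam + 1) else if J = I then lam / (lam + 1) else 0)
    else if IsIndep G (insert v I) then
      (if J = insert v I then lam / (lam + 1) else if J = I then 1 / (lam + 1) else 0)
    else (if J = I then 1 else 0)

/-- One step of the Glauber dynamics, applied to a distribution on independent sets. -/
noncomputable def stepDist (G : SimpleGraph V) (lam : ℝ) (μ : Finset V → ℝ) :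
    Finset V → ℝ :=
  fun J => ∑ I ∈ indepSets G, μ I * glauberP G lam I J

/-- The distribution of the Glauber dynamics after `t` steps started from `I`. -/
noncomputable def distAfter (G : SimpleGraph V) (lam : ℝ) (I : Finset V) (t : ℕ) :
    Finset V → ℝ :=
  (stepDist G lam)^[t] (fun J => if J = I then 1 else 0)

/-- Total variation distance between two distributions on independent sets. -/
noncomputable def tvDist (G : SimpleGraph V) (μ ν : Finset V → ℝ) : ℝ :=
  (1 / 2) * ∑ I ∈ indepSets G, |μ I - ν I|

/-- The mixing time `τ_{G,λ}` of the Glauber dynamics. -/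
noncomputable def mixingTime (G : SimpleGraph V) (lam : ℝ) : ℕ :=
  sInf {t : ℕ | ∀ I ∈ indepSets G,
    tvDist G (distAfter G lam I t) (hardCore G lam) ≤ 1 / 4}

/-- `λ̃ = e^{|ln λ|} = max (λ, 1/λ)`. -/
noncomputable def lamTilde (lam : ℝ) : ℝ := max lam lam⁻¹

/-- The independence number of the subgraph of `G` induced by `S`. -/
noncomputable def alphaOn (G : SimpleGraph V) (S : Finset V) : ℕ :=
  ((indepSets G).filter fun I => I ⊆ S).sup Finset.card

/-- The number of independent sets of the subgraph of `G` induced by `S`. -/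
noncomputable def numIndepOn (G : SimpleGraph V) (S : Finset V) : ℕ :=
  ((indepSets G).filter fun I => I ⊆ S).card

/-- The subgraph of `G` induced by a finite vertex set `S`. -/
def inducedF (G : SimpleGraph V) (S : Finset V) : SimpleGraph {x : V // x ∈ S} :=
  SimpleGraph.comap Subtype.val G

end HardCoreDefs
section Decomp

variable {V : Type*} [Fintype V] [DecidableEq V]

/-- `X : Fin p → Finset V` is a path decomposition of `G`. -/
def IsPathDecomp (G : SimpleGraph V) (p : ℕ) (X : Fin p → Finset V) : Prop :=
  (∀ v : V, ∃ i, v ∈ X i) ∧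
  (∀ u v : V, G.Adj u v → ∃ i, u ∈ X i ∧ v ∈ X i) ∧
  (∀ v : V, ∀ i j k : Fin p, i ≤ j → j ≤ k → v ∈ X i → v ∈ X k → v ∈ X j)

/-- The pathwidth of `G` : the least `w` such that `G` has a path decomposition
with all bags of size at most `w + 1`. -/
noncomputable def pathwidth (G : SimpleGraph V) : ℕ :=
  sInf {w : ℕ | ∃ (p : ℕ) (X : Fin p → Finset V),
    IsPathDecomp G p X ∧ ∀ i, (X i).card ≤ w + 1}

/-- `(T, X)` is a tree decomposition of `G`. -/
def IsTreeDecomp {ι : Type*} (G : SimpleGraph V) (T : SimpleGraph ι) (X : ι → Finset V) : Prop :=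
  T.IsTree ∧
  (∀ v : V, ∃ t, v ∈ X t) ∧
  (∀ u v : V, G.Adj u v → ∃ t, u ∈ X t ∧ v ∈ X t) ∧
  (∀ v : V, (T.induce {t | v ∈ X t}).Connected)

/-- The treewidth of `G`. -/
noncomputable def treewidth (G : SimpleGraph V) : ℕ :=
  sInf {w : ℕ | ∃ (m : ℕ) (T : SimpleGraph (Fin m)) (X : Fin m → Finset V),
    IsTreeDecomp G T X ∧ ∀ t, (X t).card ≤ w + 1}

end Decomp

/-!
In `K_{t,t}` every independent set lies within one side, so the nonempty sets on the left form a
set `B` of stationary mass `((λ+1)^t - 1)/Z ≤ 1/2` that the Glauber dynamics can only leave from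
one of the `t` singletons, by deleting its vertex. The stationary flow out of `B` is therefore
`Z⁻¹ λ/(2(λ+1))`, and the bottleneck bound `τ ≥ 1/(4Φ(B))` gives `τ ≥ (λ+1)^t/4`. Since
`mixingTime` is an infimum (which is `0` for an empty set), this needs the chain to mix at all:
all `2n`-step transition probabilities are positive, and Doeblin's argument applies.

The pathwidth of `K_{t,t}` is `t`: the bags `L ∪ {r}` give one of width `t`, and in any path
decomposition the bag where the first vertex to be forgotten is last seen also contains its `t`
neighbours. Finally `((λ+1)/2)^t (2t)^c ≤ (λ+1)^t/4` once `4(2t)^c ≤ 2^t`.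
-/

section Glauber

variable {V : Type*} {G : SimpleGraph V} {lam : ℝ} {I J K : Finset V} {v : V}

lemma IsIndep.mono (hI : IsIndep G I) (hJI : J ⊆ I) : IsIndep G J :=
  fun _ hu _ hv => hI _ (hJI hu) _ (hJI hv)

lemma isIndep_empty : IsIndep G ∅ := by
  simp [IsIndep]

section
variable [DecidableEq V]

open Classical in
noncomputable def updateProb (G : SimpleGraph V) (lam : ℝ) (v : V) (I J : Finset V) : ℝ :=
  if v ∈ I then
    (if J = I.erase v then 1 / (lam + 1) else if J = I then lam / (lam + 1) else 0)
  else if IsIndep G (insert v I) then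
    (if J = insert v I then lam / (lam + 1) else if J = I then 1 / (lam + 1) else 0)
  else (if J = I then 1 else 0)

lemma updateProb_nonneg (hlam : 0 ≤ lam) : 0 ≤ updateProb G lam v I J := by
  unfold updateProb
  split_ifs <;> positivity

lemma pow_card_mul_updateProb_of_mem_of_not_mem (hI : IsIndep G I) (hvI : v ∈ I)
    (hvJ : v ∉ J) :
    lam ^ #I * updateProb G lam v I J = lam ^ #J * updateProb G lam v J I := by
  have hJI : J ≠ I := fun h => hvJ (h ▸ hvI)
  by_cases hJ : J = I.erase v
  · subst hJ
    have hins : insert v (I.erase v) = I := insert_erase hvI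
    have hcard : #I = #(I.erase v) + 1 := (card_erase_add_one hvI).symm
    simp only [updateProb, hvI, hvJ, hins, hI, if_true, if_false]
    rw [hcard, pow_succ]
    ring
  · have hIJ : I ≠ insert v J := by
      rintro rfl
      exact hJ (erase_insert hvJ).symm
    simp [updateProb, hvI, hvJ, hJ, hJI, hJI.symm, hIJ]

lemma pow_card_mul_updateProb_comm (hI : IsIndep G I) (hJ : IsIndep G J) :
    lam ^ #I * updateProb G lam v I J = lam ^ #J * updateProb G lam v J I := by
  by_cases hIJ : I = J
  · rw [hIJ]
  by_cases hvI : v ∈ I <;> by_cases hvJ : v ∈ J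
  · have h1 : J ≠ I.erase v := fun h => notMem_erase v I (h ▸ hvJ)
    have h2 : I ≠ J.erase v := fun h => notMem_erase v J (h ▸ hvI)
    simp [updateProb, hvI, hvJ, h1, h2, hIJ, Ne.symm hIJ]
  · exact pow_card_mul_updateProb_of_mem_of_not_mem hI hvI hvJ
  · exact (pow_card_mul_updateProb_of_mem_of_not_mem hJ hvJ hvI).symm
  · have h1 : J ≠ insert v I := fun h => hvJ (h ▸ mem_insert_self v I)
    have h2 : I ≠ insert v J := fun h => hvI (h ▸ mem_insert_self v J)
    simp [updateProb, hvI, hvJ, h1, h2, hIJ, Ne.symm hIJ]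

end

section
variable [Fintype V]

@[simp]
lemma mem_indepSets : I ∈ indepSets G ↔ IsIndep G I := by
  simp [indepSets]

lemma Z_pos (hlam : 0 < lam) : 0 < Z G lam :=
  sum_pos (fun _ _ => pow_pos hlam _) ⟨∅, mem_indepSets.mpr isIndep_empty⟩

lemma hardCore_nonneg (hlam : 0 < lam) : 0 ≤ hardCore G lam I :=
  div_nonneg (pow_nonneg hlam.le _) (Z_pos hlam).le

lemma sum_hardCore (hlam : 0 < lam) : ∑ I ∈ indepSets G, hardCore G lam I = 1 := by
  simp only [hardCore]
  rw [← sum_div]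
  exact div_self (Z_pos hlam).ne'

lemma hardCore_le_one (hlam : 0 < lam) (hI : IsIndep G I) : hardCore G lam I ≤ 1 :=
  (sum_hardCore (G := G) hlam).symm ▸
    single_le_sum (f := hardCore G lam) (fun _ _ => hardCore_nonneg hlam) (mem_indepSets.mpr hI)

end

variable [Fintype V] [DecidableEq V]

lemma glauberP_eq_sum_updateProb :
    glauberP G lam I J = 1 / (Fintype.card V : ℝ) * ∑ v, updateProb G lam v I J :=
  rfl

lemma glauberP_nonneg (hlam : 0 ≤ lam) : 0 ≤ glauberP G lam I J := by
  rw [glauberP_eq_sum_updateProb]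
  exact mul_nonneg (by positivity) (sum_nonneg fun _ _ => updateProb_nonneg hlam)

lemma glauberP_pos_of_updateProb_pos (hlam : 0 ≤ lam) (h : 0 < updateProb G lam v I J) :
    0 < glauberP G lam I J := by
  have : Nonempty V := ⟨v⟩
  rw [glauberP_eq_sum_updateProb]
  exact mul_pos (by positivity)
    (h.trans_le (single_le_sum (f := fun w => updateProb G lam w I J)
      (fun _ _ => updateProb_nonneg hlam) (mem_univ v)))

lemma glauberP_eq_zero_of_forall_ne (hJI : J ≠ I)
    (h : ∀ v, J ≠ I.erase v ∧ J ≠ insert v I) : glauberP G lam I J = 0 := by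
  rw [glauberP_eq_sum_updateProb, sum_eq_zero, mul_zero]
  intro v _
  simp [updateProb, hJI, (h v).1, (h v).2]

lemma glauberP_eq_zero_of_not_isIndep (hI : IsIndep G I) (hJ : ¬ IsIndep G J) :
    glauberP G lam I J = 0 := by
  rw [glauberP_eq_sum_updateProb, sum_eq_zero, mul_zero]
  intro v _
  have hJI : J ≠ I := by rintro rfl; exact hJ hI
  have hJe : J ≠ I.erase v := by rintro rfl; exact hJ (hI.mono (erase_subset v I))
  unfold updateProb
  split_ifs with _ hins hJins <;> first | rfl | exact absurd (hJins ▸ hins) hJ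

lemma sum_updateProb (hlam : 0 ≤ lam) (hI : IsIndep G I) :
    ∑ J ∈ indepSets G, updateProb G lam v I J = 1 := by
  have hl : lam + 1 ≠ 0 := by positivity
  have hIS : I ∈ indepSets G := mem_indepSets.mpr hI
  unfold updateProb
  by_cases hv : v ∈ I
  · have hne : I.erase v ≠ I := (erase_ne_self).mpr hv
    rw [sum_eq_add_of_mem (I.erase v) I (mem_indepSets.mpr (hI.mono (erase_subset v I))) hIS
      hne (fun J _ hJ => by simp [hv, hJ.1, hJ.2])]
    simp only [hv, if_true, if_neg hne.symm]
    field_simp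
    ring
  · by_cases hins : IsIndep G (insert v I)
    · have hne : insert v I ≠ I := fun h => hv (h ▸ mem_insert_self v I)
      rw [sum_eq_add_of_mem (insert v I) I (mem_indepSets.mpr hins) hIS
        hne (fun J _ hJ => by simp [hv, hins, hJ.1, hJ.2])]
      simp only [hv, hins, if_false, if_true, if_neg hne.symm]
      field_simp
    · simp [hv, hins, hIS]

lemma sum_glauberP [Nonempty V] (hlam : 0 ≤ lam) (hI : IsIndep G I) :
    ∑ J ∈ indepSets G, glauberP G lam I J = 1 := by
  simp_rw [glauberP_eq_sum_updateProb, ← mul_sum]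
  rw [sum_comm, sum_congr rfl fun v _ => sum_updateProb hlam hI]
  simp

lemma pow_card_mul_glauberP_comm (hI : IsIndep G I) (hJ : IsIndep G J) :
    lam ^ #I * glauberP G lam I J = lam ^ #J * glauberP G lam J I := by
  simp_rw [glauberP_eq_sum_updateProb, mul_left_comm _ (1 / _ : ℝ), mul_sum,
    pow_card_mul_updateProb_comm hI hJ]

lemma glauberP_self_pos [Nonempty V] (hlam : 0 < lam) : 0 < glauberP G lam I I := by
  obtain ⟨v⟩ := ‹Nonempty V›
  refine glauberP_pos_of_updateProb_pos (v := v) hlam.le ?_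
  have hne : I ≠ I.erase v ∨ v ∉ I := by
    by_cases hv : v ∈ I
    · exact Or.inl fun h => notMem_erase v I (h ▸ hv)
    · exact Or.inr hv
  have hne' : v ∉ I → I ≠ insert v I := fun hv h => hv (h ▸ mem_insert_self v I)
  unfold updateProb
  split_ifs <;> first | positivity | tauto

lemma glauberP_erase_pos (hlam : 0 < lam) (hv : v ∈ I) : 0 < glauberP G lam I (I.erase v) :=
  glauberP_pos_of_updateProb_pos hlam.le (by rw [updateProb, if_pos hv, if_pos rfl]; positivity)

lemma glauberP_singleton_empty :
    glauberP G lam {v} ∅ = 1 / (Fintype.card V : ℝ) * (1 / (lam + 1)) := by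
  rw [glauberP_eq_sum_updateProb, sum_eq_single v]
  · simp [updateProb]
  · intro w _ hw
    simp [updateProb, hw, (insert_nonempty w {v}).ne_empty.symm]
  · simp

lemma glauberP_empty_eq_zero (hI : 1 < #I) : glauberP G lam I ∅ = 0 := by
  refine glauberP_eq_zero_of_forall_ne (by rintro rfl; simp at hI) fun v => ⟨fun h => ?_, ?_⟩
  · have := pred_card_le_card_erase (s := I) (a := v)
    rw [← h, card_empty] at this
    omega
  · exact (insert_nonempty v I).ne_empty.symm

lemma glauberP_pos_symm (hlam : 0 < lam) (hI : IsIndep G I) (hJ : IsIndep G J)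
    (h : 0 < glauberP G lam I J) : 0 < glauberP G lam J I := by
  have hpos := mul_pos (pow_pos hlam #I) h
  rw [pow_card_mul_glauberP_comm hI hJ] at hpos
  exact pos_of_mul_pos_right hpos (pow_nonneg hlam.le _)

lemma distAfter_zero : distAfter G lam I 0 J = if J = I then 1 else 0 :=
  rfl

lemma distAfter_succ (s : ℕ) :
    distAfter G lam I (s + 1) J =
      ∑ K ∈ indepSets G, distAfter G lam I s K * glauberP G lam K J := by
  rw [distAfter, Function.iterate_succ_apply']
  rfl

lemma distAfter_one (hI : IsIndep G I) : distAfter G lam I 1 J = glauberP G lam I J :=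
  (distAfter_succ 0).trans <| by
    simp only [distAfter_zero, ite_mul, one_mul, zero_mul]
    rw [sum_ite_eq', if_pos (mem_indepSets.mpr hI)]

lemma distAfter_nonneg (hlam : 0 ≤ lam) (s : ℕ) : 0 ≤ distAfter G lam I s J := by
  induction s generalizing J with
  | zero => rw [distAfter_zero]; positivity
  | succ s ih =>
    rw [distAfter_succ]
    exact sum_nonneg fun K _ => mul_nonneg ih (glauberP_nonneg hlam)

lemma distAfter_eq_zero_of_not_isIndep (hI : IsIndep G I) (hJ : ¬ IsIndep G J) (s : ℕ) :
    distAfter G lam I s J = 0 := by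
  cases s with
  | zero =>
    rw [distAfter_zero, if_neg]
    rintro rfl
    exact hJ hI
  | succ s =>
    rw [distAfter_succ, sum_eq_zero]
    intro K hK
    rw [glauberP_eq_zero_of_not_isIndep (mem_indepSets.mp hK) hJ, mul_zero]

lemma sum_distAfter [Nonempty V] (hlam : 0 ≤ lam) (hI : IsIndep G I) (s : ℕ) :
    ∑ J ∈ indepSets G, distAfter G lam I s J = 1 := by
  induction s with
  | zero =>
    simp only [distAfter_zero]
    rw [sum_ite_eq', if_pos (mem_indepSets.mpr hI)]
  | succ s ih =>
    simp_rw [distAfter_succ]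
    rw [sum_comm, ← ih]
    exact sum_congr rfl fun K hK => by
      rw [← mul_sum, sum_glauberP hlam (mem_indepSets.mp hK), mul_one]

lemma distAfter_add (hI : IsIndep G I) (a b : ℕ) :
    distAfter G lam I (a + b) J =
      ∑ K ∈ indepSets G, distAfter G lam I a K * distAfter G lam K b J := by
  induction b generalizing J with
  | zero =>
    by_cases hJ : IsIndep G J
    · simp [distAfter_zero, hJ]
    · simp [distAfter_zero, hJ, distAfter_eq_zero_of_not_isIndep hI hJ]
  | succ b ih =>
    rw [← add_assoc, distAfter_succ]
    simp_rw [ih, distAfter_succ, sum_mul, mul_sum, mul_assoc]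
    exact sum_comm

lemma mul_distAfter_le_distAfter_add (hlam : 0 ≤ lam) (hI : IsIndep G I) (hK : IsIndep G K)
    (a b : ℕ) :
    distAfter G lam I a K * distAfter G lam K b J ≤ distAfter G lam I (a + b) J := by
  rw [distAfter_add hI]
  exact single_le_sum (f := fun L => distAfter G lam I a L * distAfter G lam L b J)
    (fun _ _ => mul_nonneg (distAfter_nonneg hlam a) (distAfter_nonneg hlam b))
    (mem_indepSets.mpr hK)

/-- Route `I → ∅ → J`, deleting the vertices of `I` one at a time and then inserting those of
`J`, with self-loops to pad. -/
lemma distAfter_pos [Nonempty V] (hlam : 0 < lam) {s : ℕ} (hI : IsIndep G I) (hJ : IsIndep G J)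
    (hs : #I + #J ≤ s) : 0 < distAfter G lam I s J := by
  induction s generalizing I J with
  | zero =>
    obtain ⟨rfl, rfl⟩ : I = ∅ ∧ J = ∅ := by simp_all
    simp [distAfter_zero]
  | succ s ih =>
    have last_step : ∀ K, IsIndep G K → #I + #K ≤ s → 0 < glauberP G lam K J →
        0 < distAfter G lam I (s + 1) J := fun K hK hsK hKJ =>
      (mul_pos (ih hI hK hsK) (by rwa [distAfter_one hK])).trans_le
        (mul_distAfter_le_distAfter_add hlam.le hI hK s 1)
    by_cases hJne : J.Nonempty
    · obtain ⟨v, hv⟩ := hJne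
      have hJv := hJ.mono (erase_subset v J)
      have := card_pos.mpr ⟨v, hv⟩
      refine last_step _ hJv (by rw [card_erase_of_mem hv]; omega) ?_
      exact glauberP_pos_symm hlam hJ hJv (glauberP_erase_pos hlam hv)
    obtain rfl := not_nonempty_iff_eq_empty.mp hJne
    by_cases hIne : I.Nonempty
    · obtain ⟨v, hv⟩ := hIne
      have hIv := hI.mono (erase_subset v I)
      have := card_pos.mpr ⟨v, hv⟩
      rw [card_empty] at hs
      have hstep := (mul_pos (by rw [distAfter_one hI]; exact glauberP_erase_pos hlam hv)
        (ih hIv isIndep_empty (by rw [card_erase_of_mem hv, card_empty]; omega))).trans_le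
        (mul_distAfter_le_distAfter_add hlam.le hI hIv 1 s)
      rwa [add_comm] at hstep
    · obtain rfl := not_nonempty_iff_eq_empty.mp hIne
      exact last_step ∅ isIndep_empty (by simp) (glauberP_self_pos hlam)

lemma sum_pow_card_mul_glauberP [Nonempty V] (hlam : 0 ≤ lam) (hJ : IsIndep G J) :
    ∑ K ∈ indepSets G, lam ^ #K * glauberP G lam K J = lam ^ #J := by
  rw [sum_congr rfl fun K hK => pow_card_mul_glauberP_comm (mem_indepSets.mp hK) hJ,
    ← mul_sum, sum_glauberP hlam hJ, mul_one]

lemma sum_pow_card_mul_distAfter [Nonempty V] (hlam : 0 ≤ lam) (hJ : IsIndep G J) (s : ℕ) :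
    ∑ K ∈ indepSets G, lam ^ #K * distAfter G lam K s J = lam ^ #J := by
  induction s generalizing J with
  | zero =>
    simp only [distAfter_zero, mul_ite, mul_one, mul_zero]
    rw [sum_ite_eq, if_pos (mem_indepSets.mpr hJ)]
  | succ s ih =>
    calc ∑ K ∈ indepSets G, lam ^ #K * distAfter G lam K (s + 1) J
        = ∑ L ∈ indepSets G, (∑ K ∈ indepSets G, lam ^ #K * distAfter G lam K s L) *
            glauberP G lam L J := by
          simp_rw [distAfter_succ, mul_sum, sum_mul, mul_assoc]
          exact sum_comm
      _ = ∑ L ∈ indepSets G, lam ^ #L * glauberP G lam L J :=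
          sum_congr rfl fun L hL => by rw [ih (mem_indepSets.mp hL)]
      _ = lam ^ #J := sum_pow_card_mul_glauberP hlam hJ

lemma sum_hardCore_mul_distAfter [Nonempty V] (hlam : 0 < lam) (hJ : IsIndep G J) (s : ℕ) :
    ∑ K ∈ indepSets G, hardCore G lam K * distAfter G lam K s J = hardCore G lam J := by
  simp only [hardCore, div_mul_eq_mul_div]
  rw [← sum_div, sum_pow_card_mul_distAfter hlam.le hJ]

/-- Doeblin: the minorization makes `Pˢ(K, ·) - δ π` a nonnegative kernel of total mass
`1 - δ`, and `μ Pˢ - π = (μ - π)(Pˢ - δ π)` because `μ - π` has total mass `0`. -/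
lemma sum_abs_distAfter_add_sub_le [Nonempty V] (hlam : 0 < lam) {s : ℕ} {δ : ℝ}
    (hδ : ∀ K ∈ indepSets G, ∀ J ∈ indepSets G,
      δ * hardCore G lam J ≤ distAfter G lam K s J)
    (hI : IsIndep G I) (a : ℕ) :
    ∑ J ∈ indepSets G, |distAfter G lam I (a + s) J - hardCore G lam J| ≤
      (1 - δ) * ∑ K ∈ indepSets G, |distAfter G lam I a K - hardCore G lam K| := by
  have key : ∀ J ∈ indepSets G, distAfter G lam I (a + s) J - hardCore G lam J =
      ∑ K ∈ indepSets G, (distAfter G lam I a K - hardCore G lam K) *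
        (distAfter G lam K s J - δ * hardCore G lam J) := by
    intro J hJ
    simp only [sub_mul, mul_sub, sum_sub_distrib]
    rw [← distAfter_add hI, sum_hardCore_mul_distAfter hlam (mem_indepSets.mp hJ), ← sum_mul,
      ← sum_mul, sum_distAfter hlam.le hI, sum_hardCore hlam]
    ring
  calc ∑ J ∈ indepSets G, |distAfter G lam I (a + s) J - hardCore G lam J|
      ≤ ∑ J ∈ indepSets G, ∑ K ∈ indepSets G, |distAfter G lam I a K - hardCore G lam K| *
          (distAfter G lam K s J - δ * hardCore G lam J) := by
        refine sum_le_sum fun J hJ => ?_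
        rw [key J hJ]
        refine (abs_sum_le_sum_abs _ _).trans_eq (sum_congr rfl fun K hK => ?_)
        rw [abs_mul, abs_of_nonneg (sub_nonneg.mpr (hδ K hK J hJ))]
    _ = ∑ K ∈ indepSets G, |distAfter G lam I a K - hardCore G lam K| * (1 - δ) := by
        rw [sum_comm]
        refine sum_congr rfl fun K hK => ?_
        rw [← mul_sum, sum_sub_distrib, sum_distAfter hlam.le (mem_indepSets.mp hK), ← mul_sum,
          sum_hardCore hlam, mul_one]
    _ = (1 - δ) * ∑ K ∈ indepSets G, |distAfter G lam I a K - hardCore G lam K| := by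
        rw [← sum_mul, mul_comm]

lemma sum_abs_distAfter_mul_sub_le [Nonempty V] (hlam : 0 < lam) {s : ℕ} {δ : ℝ}
    (hδ1 : δ ≤ 1)
    (hδ : ∀ K ∈ indepSets G, ∀ J ∈ indepSets G,
      δ * hardCore G lam J ≤ distAfter G lam K s J)
    (hI : IsIndep G I) (k : ℕ) :
    ∑ J ∈ indepSets G, |distAfter G lam I (k * s) J - hardCore G lam J| ≤
      2 * (1 - δ) ^ k := by
  induction k with
  | zero =>
    calc ∑ J ∈ indepSets G, |distAfter G lam I (0 * s) J - hardCore G lam J|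
        ≤ ∑ J ∈ indepSets G, (distAfter G lam I (0 * s) J + hardCore G lam J) :=
          sum_le_sum fun J _ => (abs_sub _ _).trans_eq <| by
            rw [abs_of_nonneg (distAfter_nonneg hlam.le _), abs_of_nonneg (hardCore_nonneg hlam)]
      _ = 2 * (1 - δ) ^ 0 := by
          rw [sum_add_distrib, sum_distAfter hlam.le hI, sum_hardCore hlam]
          norm_num
  | succ k ih =>
    rw [Nat.succ_mul]
    calc _ ≤ (1 - δ) * ∑ K ∈ indepSets G, |distAfter G lam I (k * s) K - hardCore G lam K| :=
          sum_abs_distAfter_add_sub_le hlam hδ hI _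
      _ ≤ (1 - δ) * (2 * (1 - δ) ^ k) := mul_le_mul_of_nonneg_left ih (by linarith)
      _ = 2 * (1 - δ) ^ (k + 1) := by ring

theorem exists_forall_tvDist_distAfter_le [Nonempty V] (hlam : 0 < lam) {ε : ℝ} (hε : 0 < ε) :
    ∃ T : ℕ, ∀ I ∈ indepSets G, tvDist G (distAfter G lam I T) (hardCore G lam) ≤ ε := by
  set S := indepSets G
  set s := 2 * Fintype.card V
  have hS : (S ×ˢ S).Nonempty := ⟨(∅, ∅), mem_product.mpr (by simp [S, isIndep_empty])⟩
  obtain ⟨⟨K₀, J₀⟩, h₀, hmin⟩ :=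
    exists_min_image (S ×ˢ S) (fun p => distAfter G lam p.1 s p.2) hS
  set δ := distAfter G lam K₀ s J₀
  obtain ⟨hK₀, hJ₀⟩ := mem_product.mp h₀
  have hδ : 0 < δ := distAfter_pos hlam (mem_indepSets.mp hK₀) (mem_indepSets.mp hJ₀)
    (by have := card_le_univ K₀; have := card_le_univ J₀; omega)
  have hδ1 : δ ≤ 1 := (sum_distAfter hlam.le (mem_indepSets.mp hK₀) s) ▸
    single_le_sum (f := distAfter G lam K₀ s) (fun _ _ => distAfter_nonneg hlam.le s) hJ₀
  have hminor : ∀ K ∈ S, ∀ J ∈ S, δ * hardCore G lam J ≤ distAfter G lam K s J :=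
    fun K hK J hJ =>
      (mul_le_of_le_one_right hδ.le (hardCore_le_one hlam (mem_indepSets.mp hJ))).trans
        (hmin (K, J) (mem_product.mpr ⟨hK, hJ⟩))
  obtain ⟨k, hk⟩ := exists_pow_lt_of_lt_one hε (by linarith : 1 - δ < 1)
  refine ⟨k * s, fun I hI => ?_⟩
  have := sum_abs_distAfter_mul_sub_le hlam hδ1 hminor (mem_indepSets.mp hI) k
  rw [tvDist]
  linarith

lemma le_mixingTime [Nonempty V] (hlam : 0 < lam) {b : ℝ}
    (h : ∀ T : ℕ, (∀ I ∈ indepSets G,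
      tvDist G (distAfter G lam I T) (hardCore G lam) ≤ 1 / 4) → b ≤ T) :
    b ≤ mixingTime G lam :=
  h _ (Nat.sInf_mem (exists_forall_tvDist_distAfter_le hlam (by norm_num : (0 : ℝ) < 1 / 4)))

lemma sum_sub_sum_le_tvDist {μ ν : Finset V → ℝ} {A : Finset (Finset V)}
    (hA : A ⊆ indepSets G)
    (h : ∑ I ∈ indepSets G, μ I = ∑ I ∈ indepSets G, ν I) :
    ∑ I ∈ A, ν I - ∑ I ∈ A, μ I ≤ tvDist G μ ν := by
  have hsplit := sum_sdiff hA (f := fun I => ν I - μ I)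
  have habs := sum_sdiff hA (f := fun I => |μ I - ν I|)
  have hin : ∑ I ∈ A, (ν I - μ I) ≤ ∑ I ∈ A, |μ I - ν I| :=
    sum_le_sum fun _ _ => (le_abs_self _).trans (abs_sub_comm _ _).le
  have hout :
      -∑ I ∈ indepSets G \ A, (ν I - μ I) ≤ ∑ I ∈ indepSets G \ A, |μ I - ν I| := by
    rw [← sum_neg_distrib]
    exact sum_le_sum fun _ _ => by rw [neg_sub]; exact le_abs_self _
  simp only [sum_sub_distrib] at hsplit hin hout
  rw [tvDist]
  linarith

/-- `Z · Q(B, Bᶜ)` in the usual notation for the ergodic flow out of `B`. -/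
noncomputable def escapeFlow (G : SimpleGraph V) (lam : ℝ) (B : Finset (Finset V)) : ℝ :=
  ∑ I ∈ B, lam ^ #I * ∑ J ∈ indepSets G \ B, glauberP G lam I J

variable {B : Finset (Finset V)}

lemma sum_pow_card_mul_distAfter_le [Nonempty V] (hlam : 0 ≤ lam) (hB : B ⊆ indepSets G)
    (hJ : IsIndep G J) (s : ℕ) : ∑ I ∈ B, lam ^ #I * distAfter G lam I s J ≤ lam ^ #J :=
  (sum_le_sum_of_subset_of_nonneg hB fun _ _ _ =>
    mul_nonneg (pow_nonneg hlam _) (distAfter_nonneg hlam s)).trans_eq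
    (sum_pow_card_mul_distAfter hlam hJ s)

/-- Started from `π` conditioned on `B`, the chain stays below `π` pointwise, so each step moves
at most the stationary flow out of `B`. -/
lemma sum_compl_sum_pow_card_mul_distAfter_le [Nonempty V] (hlam : 0 ≤ lam)
    (hB : B ⊆ indepSets G) (s : ℕ) :
    ∑ J ∈ indepSets G \ B, ∑ I ∈ B, lam ^ #I * distAfter G lam I s J ≤
      s * escapeFlow G lam B := by
  induction s with
  | zero =>
    rw [Nat.cast_zero, zero_mul]
    refine (sum_eq_zero fun J hJ => sum_eq_zero fun I hI => ?_).le
    rw [distAfter_zero, if_neg (by rintro rfl; exact (mem_sdiff.mp hJ).2 hI), mul_zero]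
  | succ s ih =>
    set ν : Finset V → ℝ := fun K => ∑ I ∈ B, lam ^ #I * distAfter G lam I s K
    have hν : ∀ J, ∑ I ∈ B, lam ^ #I * distAfter G lam I (s + 1) J =
        ∑ K ∈ indepSets G, ν K * glauberP G lam K J := fun J => by
      simp_rw [ν, distAfter_succ, mul_sum, sum_mul, mul_assoc]
      exact sum_comm
    have hleave : ∀ K ∈ indepSets G, ∑ J ∈ indepSets G \ B, glauberP G lam K J ≤ 1 :=
      fun K hK => (sum_le_sum_of_subset_of_nonneg sdiff_subset fun _ _ _ =>
        glauberP_nonneg hlam).trans_eq (sum_glauberP hlam (mem_indepSets.mp hK))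
    calc ∑ J ∈ indepSets G \ B, ∑ I ∈ B, lam ^ #I * distAfter G lam I (s + 1) J
        = ∑ K ∈ indepSets G \ B, ν K * ∑ J ∈ indepSets G \ B, glauberP G lam K J +
            ∑ K ∈ B, ν K * ∑ J ∈ indepSets G \ B, glauberP G lam K J := by
          simp_rw [hν]
          rw [sum_comm, ← sum_sdiff hB]
          simp_rw [mul_sum]
      _ ≤ ∑ K ∈ indepSets G \ B, ν K + escapeFlow G lam B := by
          refine add_le_add (sum_le_sum fun K hK => ?_) (sum_le_sum fun K hK => ?_)
          · exact mul_le_of_le_one_right (sum_nonneg fun _ _ =>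
              mul_nonneg (pow_nonneg hlam _) (distAfter_nonneg hlam s))
              (hleave K (mem_sdiff.mp hK).1)
          · exact mul_le_mul_of_nonneg_right
              (sum_pow_card_mul_distAfter_le hlam hB (mem_indepSets.mp (hB hK)) s)
              (sum_nonneg fun _ _ => glauberP_nonneg hlam)
      _ ≤ (s + 1 : ℕ) * escapeFlow G lam B := by
          push_cast
          linarith

/-- The bottleneck bound `τ ≥ 1 / (4 Φ(B))` for a set `B` of stationary mass at most `1/2`. -/
theorem sum_pow_card_le_four_mul_escapeFlow [Nonempty V] (hlam : 0 < lam)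
    (hB : B ⊆ indepSets G) (hBZ : 2 * ∑ I ∈ B, lam ^ #I ≤ Z G lam) {T : ℕ}
    (hT : ∀ I ∈ indepSets G, tvDist G (distAfter G lam I T) (hardCore G lam) ≤ 1 / 4) :
    ∑ I ∈ B, lam ^ #I ≤ 4 * T * escapeFlow G lam B := by
  have hcompl : 1 / 2 ≤ ∑ J ∈ indepSets G \ B, hardCore G lam J := by
    have hsplit := sum_sdiff hB (f := hardCore G lam)
    have hBmass : ∑ J ∈ B, hardCore G lam J ≤ 1 / 2 := by
      simp only [hardCore]
      rw [← sum_div, div_le_iff₀ (Z_pos hlam)]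
      linarith
    rw [sum_hardCore hlam] at hsplit
    linarith
  have hesc : ∀ I ∈ B, 1 / 4 ≤ ∑ J ∈ indepSets G \ B, distAfter G lam I T J := by
    intro I hI
    have hI' := mem_indepSets.mp (hB hI)
    have := sum_sub_sum_le_tvDist (sdiff_subset (s := indepSets G) (t := B))
      ((sum_distAfter hlam.le hI' T).trans (sum_hardCore hlam).symm)
    linarith [hT I (hB hI)]
  calc ∑ I ∈ B, lam ^ #I
      = 4 * ∑ I ∈ B, lam ^ #I * (1 / 4) := by rw [← sum_mul]; ring
    _ ≤ 4 * ∑ I ∈ B, lam ^ #I * ∑ J ∈ indepSets G \ B, distAfter G lam I T J := by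
        gcongr with I hI
        exact hesc I hI
    _ = 4 * ∑ J ∈ indepSets G \ B, ∑ I ∈ B, lam ^ #I * distAfter G lam I T J := by
        simp_rw [mul_sum]
        rw [sum_comm]
    _ ≤ 4 * T * escapeFlow G lam B := by
        rw [mul_assoc]
        gcongr
        exact sum_compl_sum_pow_card_mul_distAfter_le hlam.le hB T

end Glauber

section PathDecomposition

variable {V : Type*} [Fintype V] [DecidableEq V] {G : SimpleGraph V} {p : ℕ}
  {X : Fin p → Finset V}

/-- The vertex whose last bag comes first has its whole neighbourhood in that bag. -/
lemma IsPathDecomp.exists_neighbors_subset [Nonempty V] (hX : IsPathDecomp G p X) :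
    ∃ v i, v ∈ X i ∧ ∀ w, G.Adj v w → w ∈ X i := by
  obtain ⟨hcover, hedge, hconv⟩ := hX
  have hne : ∀ u, (univ.filter fun i => u ∈ X i).Nonempty := fun u => by
    obtain ⟨i, hi⟩ := hcover u
    exact ⟨i, by simp [hi]⟩
  let last u := (univ.filter fun i => u ∈ X i).max' (hne u)
  have mem_last : ∀ u, u ∈ X (last u) := fun u => (mem_filter.mp (max'_mem _ (hne u))).2
  have le_last : ∀ u i, u ∈ X i → i ≤ last u := fun u i hi => le_max' _ i (by simp [hi])
  obtain ⟨v, -, hv⟩ := exists_min_image univ last univ_nonempty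
  refine ⟨v, last v, mem_last v, fun w hvw => ?_⟩
  obtain ⟨j, hvj, hwj⟩ := hedge v w hvw
  exact hconv w j (last v) (last w) (le_last v j hvj) (hv w (mem_univ w)) hwj (mem_last w)

end PathDecomposition

section CompleteBipartite

local notation "K[" t "]" => completeBipartiteGraph (Fin t) (Fin t)

variable {t : ℕ} {lam : ℝ} {I J : Finset (Fin t ⊕ Fin t)}

def leftPart (t : ℕ) : Finset (Fin t ⊕ Fin t) := univ.map .inl

def rightPart (t : ℕ) : Finset (Fin t ⊕ Fin t) := univ.map .inr

@[simp] lemma inl_mem_leftPart (a : Fin t) : .inl a ∈ leftPart t := by simp [leftPart]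
@[simp] lemma inr_notMem_leftPart (b : Fin t) : .inr b ∉ leftPart t := by simp [leftPart]
@[simp] lemma inr_mem_rightPart (b : Fin t) : .inr b ∈ rightPart t := by simp [rightPart]
@[simp] lemma inl_notMem_rightPart (a : Fin t) : .inl a ∉ rightPart t := by simp [rightPart]

@[simp] lemma card_leftPart : #(leftPart t) = t := by simp [leftPart]
@[simp] lemma card_rightPart : #(rightPart t) = t := by simp [rightPart]

lemma leftPart_inter_rightPart : leftPart t ∩ rightPart t = ∅ := by
  ext (a | b) <;> simp

lemma isIndep_completeBipartiteGraph_iff :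
    IsIndep K[t] I ↔ I ⊆ leftPart t ∨ I ⊆ rightPart t := by
  constructor
  · intro h
    by_contra! hc
    obtain ⟨⟨x, hxI, hxL⟩, ⟨y, hyI, hyR⟩⟩ := And.imp not_subset.mp not_subset.mp hc
    rcases x with a | b
    · simp at hxL
    rcases y with a | b'
    · exact h _ hyI _ hxI (by simp)
    · simp at hyR
  · rintro (h | h) x hx y hy
    · rcases mem_map.mp (h hx) with ⟨a, -, rfl⟩
      rcases mem_map.mp (h hy) with ⟨a', -, rfl⟩
      simp
    · rcases mem_map.mp (h hx) with ⟨b, -, rfl⟩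
      rcases mem_map.mp (h hy) with ⟨b', -, rfl⟩
      simp

lemma indepSets_completeBipartiteGraph :
    indepSets K[t] = (leftPart t).powerset ∪ (rightPart t).powerset := by
  ext I
  simp [isIndep_completeBipartiteGraph_iff]

lemma sum_powerset_pow_card {α : Type*} (s : Finset α) :
    ∑ I ∈ s.powerset, lam ^ #I = (lam + 1) ^ #s := by
  simpa using sum_pow_mul_eq_add_pow lam 1 s

lemma Z_completeBipartiteGraph : Z K[t] lam = 2 * (lam + 1) ^ t - 1 := by
  have h := sum_union_inter (s₁ := (leftPart t).powerset) (s₂ := (rightPart t).powerset)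
    (f := fun I => lam ^ #I)
  have hinter : (leftPart t).powerset ∩ (rightPart t).powerset = {∅} := by
    ext I
    simp [← subset_inter_iff, leftPart_inter_rightPart]
  rw [hinter] at h
  simp only [sum_powerset_pow_card, card_leftPart, card_rightPart, sum_singleton, card_empty,
    pow_zero] at h
  rw [Z, indepSets_completeBipartiteGraph]
  linarith

def leftSets (t : ℕ) : Finset (Finset (Fin t ⊕ Fin t)) := (leftPart t).powerset.erase ∅

lemma mem_leftSets : I ∈ leftSets t ↔ I ≠ ∅ ∧ I ⊆ leftPart t := by
  rw [leftSets, mem_erase, mem_powerset]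

lemma leftSets_subset_indepSets : leftSets t ⊆ indepSets K[t] := fun I hI => by
  rw [mem_indepSets, isIndep_completeBipartiteGraph_iff]
  exact Or.inl (mem_leftSets.mp hI).2

lemma sum_leftSets_pow_card : ∑ I ∈ leftSets t, lam ^ #I = (lam + 1) ^ t - 1 := by
  rw [leftSets, sum_erase_eq_sub (empty_mem_powerset _), sum_powerset_pow_card, card_leftPart,
    card_empty, pow_zero]

lemma glauberP_eq_zero_of_mem_leftSets (hI : I ∈ leftSets t) (hJ : IsIndep K[t] J)
    (hJB : J ∉ leftSets t) (hJ0 : J ≠ ∅) : glauberP K[t] lam I J = 0 := by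
  obtain ⟨hI0, hIL⟩ := mem_leftSets.mp hI
  refine glauberP_eq_zero_of_forall_ne (by rintro rfl; exact hJB hI) fun v => ⟨?_, ?_⟩
  · rintro rfl
    exact hJB (mem_leftSets.mpr ⟨hJ0, (erase_subset v I).trans hIL⟩)
  · rintro rfl
    rcases isIndep_completeBipartiteGraph_iff.mp hJ with hL | hR
    · exact hJB (mem_leftSets.mpr ⟨hJ0, hL⟩)
    · have : I ⊆ leftPart t ∩ rightPart t :=
        subset_inter hIL ((subset_insert v I).trans hR)
      rw [leftPart_inter_rightPart, subset_empty] at this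
      exact hI0 this

lemma escapeFlow_leftSets (ht : 0 < t) :
    escapeFlow K[t] lam (leftSets t) = lam / (2 * (lam + 1)) := by
  have hescape : ∀ I ∈ leftSets t,
      ∑ J ∈ indepSets K[t] \ leftSets t, glauberP K[t] lam I J = glauberP K[t] lam I ∅ := by
    intro I hI
    refine sum_eq_single_of_mem ∅ (mem_sdiff.mpr ⟨mem_indepSets.mpr isIndep_empty, by
      simp [mem_leftSets]⟩) fun J hJ hJ0 => ?_
    obtain ⟨hJS, hJB⟩ := mem_sdiff.mp hJ
    exact glauberP_eq_zero_of_mem_leftSets hI (mem_indepSets.mp hJS) hJB hJ0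
  have hsingletons : (leftPart t).powersetCard 1 ⊆ leftSets t := fun I hI => by
    obtain ⟨hIL, hcard⟩ := mem_powersetCard.mp hI
    exact mem_leftSets.mpr ⟨by rintro rfl; simp at hcard, hIL⟩
  rw [escapeFlow, sum_congr rfl fun I hI => by rw [hescape I hI],
    ← sum_subset hsingletons fun I hI hI1 => ?_, powersetCard_one, sum_map]
  · simp only [Function.Embedding.coeFn_mk, card_singleton, pow_one, glauberP_singleton_empty,
      sum_const, card_leftPart, Fintype.card_sum, Fintype.card_fin, nsmul_eq_mul]
    have : (t : ℝ) ≠ 0 := by positivity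
    field_simp
    push_cast
    ring
  · obtain ⟨hI0, hIL⟩ := mem_leftSets.mp hI
    have h1 : 1 < #I := by
      by_contra! h
      exact hI1 (mem_powersetCard.mpr
        ⟨hIL, le_antisymm h (card_pos.mpr (nonempty_iff_ne_empty.mpr hI0))⟩)
    rw [glauberP_empty_eq_zero h1, mul_zero]

theorem le_mixingTime_completeBipartiteGraph (ht : 0 < t) (hlam : 1 ≤ lam) :
    (lam + 1) ^ t / 4 ≤ mixingTime K[t] lam := by
  have : Nonempty (Fin t) := ⟨⟨0, ht⟩⟩
  have hlam0 : 0 < lam := by linarith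
  have hpow : 2 ≤ (lam + 1) ^ t :=
    calc (2 : ℝ) ≤ lam + 1 := by linarith
      _ ≤ (lam + 1) ^ t := le_self_pow₀ (by linarith) ht.ne'
  refine le_mixingTime hlam0 fun T hT => ?_
  have hbound := sum_pow_card_le_four_mul_escapeFlow hlam0 leftSets_subset_indepSets
    (by rw [sum_leftSets_pow_card, Z_completeBipartiteGraph]; linarith) hT
  rw [sum_leftSets_pow_card, escapeFlow_leftSets ht, mul_div_assoc', le_div_iff₀ (by positivity)]
    at hbound
  have hT0 : (0 : ℝ) ≤ T := T.cast_nonneg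
  nlinarith

lemma isPathDecomp_insert_leftPart :
    IsPathDecomp K[t] t fun i => insert (.inr i) (leftPart t) := by
  refine ⟨fun v => ?_, fun u v huv => ?_, fun v i j k hij hjk hi hk => ?_⟩
  · rcases v with a | b
    · exact ⟨a, by simp⟩
    · exact ⟨b, by simp⟩
  · rcases u with a | b <;> rcases v with a' | b' <;> simp at huv
    · exact ⟨b', by simp⟩
    · exact ⟨b, by simp⟩
  · rcases v with a | b
    · simp
    · simp only [mem_insert, Sum.inr.injEq, inr_notMem_leftPart, or_false] at hi hk ⊢
      subst hi hk
      exact le_antisymm hij hjk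

lemma pathwidth_completeBipartiteGraph (ht : 0 < t) : pathwidth K[t] = t := by
  have : Nonempty (Fin t) := ⟨⟨0, ht⟩⟩
  have hmem : t ∈ {w : ℕ | ∃ (p : ℕ) (X : Fin p → Finset (Fin t ⊕ Fin t)),
      IsPathDecomp K[t] p X ∧ ∀ i, #(X i) ≤ w + 1} :=
    ⟨t, _, isPathDecomp_insert_leftPart, fun i => (card_insert_le _ _).trans (by simp)⟩
  refine le_antisymm (Nat.sInf_le hmem) (le_csInf ⟨t, hmem⟩ ?_)
  rintro w ⟨p, X, hX, hcard⟩
  obtain ⟨v, i, hvi, hN⟩ := hX.exists_neighbors_subset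
  suffices t + 1 ≤ #(X i) by linarith [hcard i]
  rcases v with a | b
  · calc t + 1 = #(insert (.inl a) (rightPart t)) := by simp
      _ ≤ #(X i) := card_le_card <| insert_subset hvi fun y hy => by
          obtain ⟨b, -, rfl⟩ := mem_map.mp hy
          exact hN _ (by simp)
  · calc t + 1 = #(insert (.inr b) (leftPart t)) := by simp
      _ ≤ #(X i) := card_le_card <| insert_subset hvi fun y hy => by
          obtain ⟨a, -, rfl⟩ := mem_map.mp hy
          exact hN _ (by simp)

end CompleteBipartite

lemma exists_four_mul_rpow_le_two_pow (c : ℝ) :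
    ∃ t : ℕ, 0 < t ∧ 4 * (2 * t : ℝ) ^ c ≤ 2 ^ t := by
  set m := ⌈c⌉₊
  have hsmall : ∀ᶠ n : ℕ in Filter.atTop, (n : ℝ) ^ m / 2 ^ n < 1 / (4 * 2 ^ m) :=
    (tendsto_pow_const_div_const_pow_of_one_lt m one_lt_two).eventually
      (gt_mem_nhds (by positivity))
  obtain ⟨t, hsmall, ht⟩ := (hsmall.and (Filter.eventually_ge_atTop 1)).exists
  refine ⟨t, ht, ?_⟩
  have h2t : (1 : ℝ) ≤ 2 * t := by norm_cast; omega
  rw [div_lt_div_iff₀ (by positivity) (by positivity)] at hsmall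
  calc 4 * (2 * t : ℝ) ^ c ≤ 4 * (2 * t : ℝ) ^ m := by
        rw [← Real.rpow_natCast]
        gcongr
        exact Nat.le_ceil c
    _ = 4 * 2 ^ m * (t : ℝ) ^ m := by ring
    _ ≤ 2 ^ t := by linarith

theorem statement_6_general (c : ℝ) :
    ∃ t : ℕ, 0 < t ∧
      pathwidth (completeBipartiteGraph (Fin t) (Fin t)) = t ∧
      Fintype.card (Fin t ⊕ Fin t) = 2 * t ∧
      ∀ lam : ℝ, 1 ≤ lam →
        ((lam + 1) / 2) ^ pathwidth (completeBipartiteGraph (Fin t) (Fin t)) *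
            (Fintype.card (Fin t ⊕ Fin t) : ℝ) ^ c ≤
          (mixingTime (completeBipartiteGraph (Fin t) (Fin t)) lam : ℝ) := by
  obtain ⟨t, ht, hc⟩ := exists_four_mul_rpow_le_two_pow c
  have hcard : Fintype.card (Fin t ⊕ Fin t) = 2 * t := by simp [two_mul]
  refine ⟨t, ht, pathwidth_completeBipartiteGraph ht, hcard, fun lam hlam => ?_⟩
  rw [pathwidth_completeBipartiteGraph ht, hcard, Nat.cast_mul, Nat.cast_ofNat]
  calc ((lam + 1) / 2) ^ t * (2 * t : ℝ) ^ c
      ≤ ((lam + 1) / 2) ^ t * (2 ^ t / 4) := by gcongr; linarith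
    _ = (lam + 1) ^ t / 4 := by rw [div_pow]; field_simp
    _ ≤ mixingTime (completeBipartiteGraph (Fin t) (Fin t)) lam :=
        le_mixingTime_completeBipartiteGraph ht hlam

/-- For every constant `c > 0` there exists a graph `G` on `n` vertices —
namely a complete bipartite graph `K_{t,t}` with `t` sufficiently large, which has pathwidth
exactly `t` and `n = 2t` vertices — such that for every `λ ≥ 1`,
`τ_{G,λ} ≥ ((λ+1)/2)^{pw(G)} · n^c`. -/
theorem statement_6 (c : ℝ) (hc : 0 < c) :
    ∃ t : ℕ, 0 < t ∧
      pathwidth (completeBipartiteGraph (Fin t) (Fin t)) = t ∧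
      Fintype.card (Fin t ⊕ Fin t) = 2 * t ∧
      ∀ lam : ℝ, 1 ≤ lam →
        ((lam + 1) / 2) ^ pathwidth (completeBipartiteGraph (Fin t) (Fin t)) *
            (Fintype.card (Fin t ⊕ Fin t) : ℝ) ^ c ≤
          (mixingTime (completeBipartiteGraph (Fin t) (Fin t)) lam : ℝ) :=
  statement_6_general c
end

section
/- For every graph G, the bipartite pathwidth satisfies bpw(G) ≤ 2·path-α(G) + 1, and the bipartite treewidth satisfies btw(G) ≤ 2·tree-α(G) + 1. -/
open Finset

section AlphaDecomp

variable {V : Type*} [Fintype V] [DecidableEq V]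

/-- The path-independence number of `G`: the minimum, over path decompositions of `G`, of the
maximum independence number of a bag. -/
noncomputable def pathAlpha (G : SimpleGraph V) : ℕ :=
  sInf {k : ℕ | ∃ (p : ℕ) (X : Fin p → Finset V),
    IsPathDecomp G p X ∧ ∀ i, alphaOn G (X i) ≤ k}

/-- The tree-independence number of `G`: the minimum, over tree decompositions of `G`, of the
maximum independence number of a bag. -/
noncomputable def treeAlpha (G : SimpleGraph V) : ℕ :=
  sInf {k : ℕ | ∃ (m : ℕ) (T : SimpleGraph (Fin m)) (X : Fin m → Finset V),
    IsTreeDecomp G T X ∧ ∀ t, alphaOn G (X t) ≤ k}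

end AlphaDecomp

section Aux
variable {V : Type*} [Fintype V] [DecidableEq V]

lemma indep_card_le_alphaOn (G : SimpleGraph V) (X I : Finset V)
    (hI : IsIndep G I) (hIX : I ⊆ X) : I.card ≤ alphaOn G X := by
  classical
  apply Finset.le_sup
  simp [indepSets, hI, hIX]

lemma bag_card_le (G : SimpleGraph V) (S : Finset V) (X : Finset V) (k : ℕ)
    (hX : alphaOn G X ≤ k) (C : (inducedF G S).Coloring (Fin 2)) :
    (Finset.univ.filter fun x : {x : V // x ∈ S} => x.1 ∈ X).card ≤ 2 * k := by
  classical
  set Y := Finset.univ.filter fun x : {x : V // x ∈ S} => x.1 ∈ X with hY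
  have key : ∀ c : Fin 2, (Y.filter fun x => C x = c).card ≤ k := by
    intro c
    set A := Y.filter fun x => C x = c with hA
    have hcard : A.card = (A.image Subtype.val).card :=
      (Finset.card_image_of_injective _ Subtype.val_injective).symm
    rw [hcard]
    refine le_trans (indep_card_le_alphaOn G X _ ?_ ?_) hX
    · intro u hu v hv hadj
      simp only [Finset.mem_image] at hu hv
      obtain ⟨a, ha, rfl⟩ := hu
      obtain ⟨b, hb, rfl⟩ := hv
      have hab : a ≠ b := by
        rintro rfl; exact G.irrefl hadj
      have hadj' : (inducedF G S).Adj a b := hadj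
      exact C.valid hadj' (by
        simp only [hA, Finset.mem_filter] at ha hb
        rw [ha.2, hb.2])
    · intro u hu
      simp only [Finset.mem_image] at hu
      obtain ⟨a, ha, rfl⟩ := hu
      simp only [hA, hY, Finset.mem_filter, Finset.mem_univ, true_and] at ha
      exact ha.1
  have hsplit := Finset.card_filter_add_card_filter_not
    (s := Y) (p := fun x => C x = 0)
  have h1 : (Y.filter fun x => ¬ C x = 0).card = (Y.filter fun x => C x = 1).card := by
    congr 1
    apply Finset.filter_congr
    intro x _
    constructor
    · intro h
      have h2 := (C x).isLt
      rw [Fin.ext_iff] at h ⊢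
      omega
    · intro h
      rw [h]; decide
  have := key 0
  have := key 1
  omega
end Aux


theorem conn_of_subsingleton {W : Type*} [Subsingleton W] [Nonempty W]
    (H : SimpleGraph W) : H.Connected := by
  constructor
  intro a b
  rw [Subsingleton.elim a b]
/-- For every graph `G`, the bipartite pathwidth satisfies
`bpw(G) ≤ 2·path-α(G) + 1` and the bipartite treewidth satisfies `btw(G) ≤ 2·tree-α(G) + 1`;
that is, every induced bipartite subgraph `G[S]` has pathwidth at most `2·path-α(G) + 1` and
treewidth at most `2·tree-α(G) + 1`. -/
theorem statement_9 (V : Type) [Fintype V] [DecidableEq V] (G : SimpleGraph V) :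
    (∀ S : Finset V, (inducedF G S).Colorable 2 →
      pathwidth (inducedF G S) ≤ 2 * pathAlpha G + 1) ∧
    (∀ S : Finset V, (inducedF G S).Colorable 2 →
      treewidth (inducedF G S) ≤ 2 * treeAlpha G + 1) := by
  constructor
  · intro S hcol
    obtain ⟨C⟩ := hcol
    have hne : {k : ℕ | ∃ (p : ℕ) (X : Fin p → Finset V),
        IsPathDecomp G p X ∧ ∀ i, alphaOn G (X i) ≤ k}.Nonempty := by
      refine ⟨alphaOn G Finset.univ, 1, fun _ => Finset.univ,
        ⟨fun v => ⟨0, by simp⟩, fun u v _ => ⟨0, by simp, by simp⟩,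
         fun v i j k _ _ _ _ => by simp⟩, fun i => le_refl _⟩
    have hmem : pathAlpha G ∈ {k : ℕ | ∃ (p : ℕ) (X : Fin p → Finset V),
        IsPathDecomp G p X ∧ ∀ i, alphaOn G (X i) ≤ k} := Nat.sInf_mem hne
    obtain ⟨p, X, hdec, hbag⟩ := hmem
    apply Nat.sInf_le
    refine ⟨p, fun i => Finset.univ.filter fun x : {x : V // x ∈ S} => x.1 ∈ X i,
      ⟨?_, ?_, ?_⟩, ?_⟩
    · intro v; obtain ⟨i, hi⟩ := hdec.1 v.1; exact ⟨i, by simp [hi]⟩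
    · intro u v huv
      obtain ⟨i, hi1, hi2⟩ := hdec.2.1 u.1 v.1 huv
      exact ⟨i, by simp [hi1], by simp [hi2]⟩
    · intro v i j k hij hjk hi hk
      simp only [Finset.mem_filter, Finset.mem_univ, true_and] at hi hk ⊢
      exact hdec.2.2 v.1 i j k hij hjk hi hk
    · intro i
      refine le_trans ?_ (by omega : 2 * pathAlpha G ≤ 2 * pathAlpha G + 1 + 1)
      exact bag_card_le G S (X i) (pathAlpha G) (hbag i) C
  · intro S hcol
    obtain ⟨C⟩ := hcol
    have hne : {k : ℕ | ∃ (m : ℕ) (T : SimpleGraph (Fin m)) (X : Fin m → Finset V),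
        IsTreeDecomp G T X ∧ ∀ t, alphaOn G (X t) ≤ k}.Nonempty := by
      refine ⟨alphaOn G Finset.univ, 1, ⊥, fun _ => Finset.univ,
        ⟨⟨conn_of_subsingleton _, SimpleGraph.isAcyclic_bot⟩,
         fun v => ⟨0, by simp⟩, fun u v _ => ⟨0, by simp, by simp⟩, ?_⟩,
        fun t => le_refl _⟩
      intro v
      have : Nonempty {t : Fin 1 // t ∈ {t | v ∈ (Finset.univ : Finset V)}} :=
        ⟨⟨0, by simp⟩⟩
      exact conn_of_subsingleton _
    have hmem : treeAlpha G ∈ {k : ℕ | ∃ (m : ℕ) (T : SimpleGraph (Fin m))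
        (X : Fin m → Finset V),
        IsTreeDecomp G T X ∧ ∀ t, alphaOn G (X t) ≤ k} := Nat.sInf_mem hne
    obtain ⟨m, T, X, hdec, hbag⟩ := hmem
    apply Nat.sInf_le
    refine ⟨m, T, fun t => Finset.univ.filter fun x : {x : V // x ∈ S} => x.1 ∈ X t,
      ⟨hdec.1, ?_, ?_, ?_⟩, ?_⟩
    · intro v; obtain ⟨t, ht⟩ := hdec.2.1 v.1; exact ⟨t, by simp [ht]⟩
    · intro u v huv
      obtain ⟨t, ht1, ht2⟩ := hdec.2.2.1 u.1 v.1 huv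
      exact ⟨t, by simp [ht1], by simp [ht2]⟩
    · intro v
      have hset : {t | v ∈ Finset.univ.filter fun x : {x : V // x ∈ S} => x.1 ∈ X t}
          = {t | v.1 ∈ X t} := by
        ext t; simp
      rw [hset]
      exact hdec.2.2.2 v.1
    · intro t
      refine le_trans ?_ (by omega : 2 * treeAlpha G ≤ 2 * treeAlpha G + 1 + 1)
      exact bag_card_le G S (X t) (treeAlpha G) (hbag t) C
end
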